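/- Suppose β̂ minimizes the Lasso objective (2n)⁻¹‖y − X̂β‖₂² + μ‖β‖₁ with y = Xβ₀ + η, the noise condition ‖n⁻¹X̂ᵀη − n⁻¹X̂ᵀ(X̂−X)β₀‖_∞ ≤ μ/2 holds, and κ(X̂, s) ≥ κ₂/2 > 0 where s = |S|, S = supp(β₀). Then ‖X̂(β̂ − β₀)‖₂² ≤ (64/κ₂²) n s μ² and ‖β̂ − β₀‖₁ ≤ (64/κ₂²) s μ. -/

import Mathlib

open Finset Matrix

/-!
Write `δ = β̂ - β₀`. Comparing the Lasso objective at `β̂` and at `β₀` gives the basic inequality;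
by Hölder the noise condition bounds its cross term by `(nμ/2)‖δ‖₁`, and since `β₀` vanishes off
`S` the penalty difference is at most `‖δ_S‖₁ - ‖δ_Sᶜ‖₁`. Hence
`‖X̂δ‖₂² ≤ nμ (3‖δ_S‖₁ - ‖δ_Sᶜ‖₁)`, which puts `δ` in the cone of the restricted eigenvalue
condition. Combined with `‖δ_S‖₁ ≤ √s ‖δ_S‖₂` this yields `κ₂ ‖X̂δ‖₂ ≤ 6 √(ns) μ` and
`κ₂² ‖δ‖₁ ≤ 4 κ₂² ‖δ_S‖₁ ≤ 48 s μ`.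
-/

section Lasso

variable {m ι : Type*} [Fintype m] [Fintype ι]

noncomputable def lassoObjective (A : Matrix m ι ℝ) (y : m → ℝ) (n μ : ℝ) (β : ι → ℝ) : ℝ :=
  1 / (2 * n) * ∑ r, (y r - (A *ᵥ β) r) ^ 2 + μ * ∑ j, |β j|

omit [Fintype ι] in
lemma sum_sub_sq_eq (w v : m → ℝ) :
    ∑ r, (w r - v r) ^ 2 = ∑ r, w r ^ 2 - 2 * (w ⬝ᵥ v) + ∑ r, v r ^ 2 := by
  simp only [sub_sq, dotProduct, sum_add_distrib, sum_sub_distrib, mul_sum, mul_assoc]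

lemma lasso_basic_inequality {A : Matrix m ι ℝ} {y w : m → ℝ} {β₀ β : ι → ℝ} {n μ : ℝ}
    (hn : 0 < n) (hw : y - A *ᵥ β₀ = w)
    (hmin : lassoObjective A y n μ β ≤ lassoObjective A y n μ β₀) :
    ∑ r, (A *ᵥ (β - β₀)) r ^ 2 ≤
      2 * (w ⬝ᵥ A *ᵥ (β - β₀)) + 2 * n * μ * (∑ j, |β₀ j| - ∑ j, |β j|) := by
  have hres : y - A *ᵥ β = w - A *ᵥ (β - β₀) := by rw [← hw, mulVec_sub]; abel
  have h₀ : ∑ r, (y r - (A *ᵥ β₀) r) ^ 2 = ∑ r, w r ^ 2 := by simp [← hw]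
  have h : ∑ r, (y r - (A *ᵥ β) r) ^ 2 = ∑ r, (w r - (A *ᵥ (β - β₀)) r) ^ 2 := by
    simp only [← Pi.sub_apply, hres]
  unfold lassoObjective at hmin
  rw [h₀, h, sum_sub_sq_eq] at hmin
  have := mul_le_mul_of_nonneg_left hmin (by positivity : 0 ≤ 2 * n)
  field_simp at this
  linarith

omit [Fintype m] in
lemma dotProduct_le_mul_sum_abs {v x : ι → ℝ} {c : ℝ} (hv : ∀ j, |v j| ≤ c) :
    v ⬝ᵥ x ≤ c * ∑ j, |x j| := by
  rw [dotProduct, mul_sum]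
  refine sum_le_sum fun j _ => ?_
  calc v j * x j ≤ |v j| * |x j| := abs_mul (v j) (x j) ▸ le_abs_self _
    _ ≤ c * |x j| := by gcongr; exact hv j

omit [Fintype m] in
lemma sum_abs_sub_sum_abs_le [DecidableEq ι] {β₀ β : ι → ℝ} {S : Finset ι}
    (hS : ∀ j ∉ S, β₀ j = 0) :
    ∑ j, |β₀ j| - ∑ j, |β j| ≤ ∑ j ∈ S, |β j - β₀ j| - ∑ j ∈ Sᶜ, |β j - β₀ j| := by
  rw [← sum_add_sum_compl S (fun j => |β₀ j|), ← sum_add_sum_compl S (fun j => |β j|)]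
  have h₀ : ∑ j ∈ Sᶜ, |β₀ j| = 0 := sum_eq_zero fun j hj => by simp [hS j (mem_compl.1 hj)]
  have hout : ∑ j ∈ Sᶜ, |β j| = ∑ j ∈ Sᶜ, |β j - β₀ j| :=
    sum_congr rfl fun j hj => by simp [hS j (mem_compl.1 hj)]
  have hin : ∑ j ∈ S, |β₀ j| - ∑ j ∈ S, |β j| ≤ ∑ j ∈ S, |β j - β₀ j| := by
    rw [← sum_sub_distrib]
    gcongr with j
    exact abs_sub_comm (β₀ j) _ ▸ abs_sub_abs_le_abs_sub _ _
  linarith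

theorem lasso_prediction_error_le [DecidableEq ι] {A : Matrix m ι ℝ} {y w : m → ℝ}
    {β₀ β : ι → ℝ} {S : Finset ι} {n μ : ℝ} (hn : 0 < n) (hμ : 0 ≤ μ) (hw : y - A *ᵥ β₀ = w)
    (hmin : lassoObjective A y n μ β ≤ lassoObjective A y n μ β₀)
    (hnoise : ∀ j, |(Aᵀ *ᵥ w) j| ≤ n * μ / 2) (hS : ∀ j ∉ S, β₀ j = 0) :
    ∑ r, (A *ᵥ (β - β₀)) r ^ 2 ≤
      n * μ * (3 * ∑ j ∈ S, |(β - β₀) j| - ∑ j ∈ Sᶜ, |(β - β₀) j|) := by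
  have hbasic := lasso_basic_inequality hn hw hmin
  have hcorr : w ⬝ᵥ A *ᵥ (β - β₀) ≤ n * μ / 2 * ∑ j, |(β - β₀) j| := by
    rw [dotProduct_mulVec, ← mulVec_transpose]
    exact dotProduct_le_mul_sum_abs hnoise
  rw [← sum_add_sum_compl S] at hcorr
  have hsupp := mul_le_mul_of_nonneg_left (sum_abs_sub_sum_abs_le (β := β) hS)
    (by positivity : 0 ≤ 2 * n * μ)
  simp only [Pi.sub_apply] at hcorr ⊢
  linarith

omit [Fintype m] [Fintype ι] in
lemma sum_abs_le_sqrt_card_mul_sqrt_sum_sq (s : Finset ι) (f : ι → ℝ) :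
    ∑ i ∈ s, |f i| ≤ √(#s : ℝ) * √(∑ i ∈ s, f i ^ 2) := by
  rw [← Real.sqrt_mul (by positivity)]
  refine (le_abs_self _).trans (Real.abs_le_sqrt ?_)
  simpa only [sq_abs] using sq_sum_le_card_mul_sum_sq (s := s) (f := fun i => |f i|)

lemma le_of_mul_sq_le_mul {t κ c : ℝ} (ht : 0 ≤ t) (hc : 0 ≤ c) (h : κ * t ^ 2 ≤ c * t) :
    κ * t ≤ c := by
  rcases ht.eq_or_lt with rfl | ht
  · simpa using hc
  · nlinarith

theorem lasso_error_bounds_of_restricted_eigenvalue [DecidableEq ι] {A : Matrix m ι ℝ}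
    {δ : ι → ℝ} {S : Finset ι} {n μ κ : ℝ} (hn : 0 < n) (hμ : 0 < μ) (hκ : 0 < κ)
    (hbasic : ∑ r, (A *ᵥ δ) r ^ 2 ≤ n * μ * (3 * ∑ j ∈ S, |δ j| - ∑ j ∈ Sᶜ, |δ j|))
    (hRE : ∑ j ∈ Sᶜ, |δ j| ≤ 3 * ∑ j ∈ S, |δ j| →
      κ / 2 * √n * √(∑ j ∈ S, δ j ^ 2) ≤ √(∑ r, (A *ᵥ δ) r ^ 2)) :
    ∑ r, (A *ᵥ δ) r ^ 2 ≤ 36 / κ ^ 2 * n * #S * μ ^ 2 ∧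
      ∑ j, |δ j| ≤ 48 / κ ^ 2 * #S * μ := by
  have hCS := sum_abs_le_sqrt_card_mul_sqrt_sum_sq S δ
  rw [← sum_add_sum_compl S]
  set P := ∑ r, (A *ᵥ δ) r ^ 2
  set a := ∑ j ∈ S, |δ j|
  set b := ∑ j ∈ Sᶜ, |δ j|
  set q := √(#S : ℝ)
  set u := √(∑ j ∈ S, δ j ^ 2)
  set t := √P
  have hP : 0 ≤ P := by positivity
  have hb : 0 ≤ b := by positivity
  have hcone : b ≤ 3 * a := by
    have := (mul_nonneg_iff_of_pos_left (mul_pos hn hμ)).1 (hP.trans hbasic)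
    linarith
  obtain ⟨r, hr, rfl⟩ : ∃ r, 0 < r ∧ r ^ 2 = n := ⟨√n, by positivity, Real.sq_sqrt hn.le⟩
  rw [Real.sqrt_sq hr.le] at hRE
  have hq : q ^ 2 = #S := Real.sq_sqrt (by positivity)
  have ht : t ^ 2 = P := Real.sq_sqrt hP
  have ha : κ * r * a ≤ 2 * q * t :=
    calc κ * r * a ≤ κ * r * (q * u) := by gcongr
      _ = 2 * q * (κ / 2 * r * u) := by ring
      _ ≤ 2 * q * t := by gcongr; exact hRE hcone
  have hκt : κ * t ≤ 6 * r * q * μ := by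
    refine le_of_mul_sq_le_mul (Real.sqrt_nonneg P) (by positivity) ?_
    calc κ * t ^ 2 = κ * P := by rw [ht]
      _ ≤ κ * (r ^ 2 * μ * (3 * a - b)) := by gcongr
      _ ≤ 3 * r * μ * (κ * r * a) := by
        nlinarith [mul_nonneg (by positivity : 0 ≤ κ * r ^ 2 * μ) hb]
      _ ≤ 3 * r * μ * (2 * q * t) := by gcongr
      _ = 6 * r * q * μ * t := by ring
  have hκa : κ ^ 2 * a ≤ 12 * #S * μ := by
    refine le_of_mul_le_mul_left ?_ hr
    calc r * (κ ^ 2 * a) = κ * (κ * r * a) := by ring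
      _ ≤ κ * (2 * q * t) := by gcongr
      _ = 2 * q * (κ * t) := by ring
      _ ≤ 2 * q * (6 * r * q * μ) := by gcongr
      _ = r * (12 * #S * μ) := by rw [← hq]; ring
  constructor
  · rw [div_mul_eq_mul_div, div_mul_eq_mul_div, div_mul_eq_mul_div, le_div_iff₀ (by positivity)]
    calc P * κ ^ 2 = (κ * t) ^ 2 := by rw [← ht]; ring
      _ ≤ (6 * r * q * μ) ^ 2 := by gcongr
      _ = 36 * r ^ 2 * #S * μ ^ 2 := by rw [← hq]; ring
  · rw [div_mul_eq_mul_div, div_mul_eq_mul_div, le_div_iff₀ (by positivity)]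
    nlinarith

end Lasso

/-- Deterministic core of Theorem 2: under the noise condition and the restricted
eigenvalue condition `κ(X̂, s) ≥ κ₂/2`, the Lasso estimator satisfies the prediction
bound `‖X̂(β̂−β₀)‖₂² ≤ (64/κ₂²) n s μ²` and the estimation bound
`‖β̂−β₀‖₁ ≤ (64/κ₂²) s μ`, where `s = |S|`, `S = supp(β₀)`. -/
theorem stmt6 (n p : ℕ) (hn : 0 < n)
    (X Xh : Matrix (Fin n) (Fin p) ℝ) (η : Fin n → ℝ) (β₀ βh : Fin p → ℝ)
    (μ : ℝ) (hμ : 0 < μ)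
    (y : Fin n → ℝ) (hy : y = X.mulVec β₀ + η)
    (S : Finset (Fin p)) (hS : ∀ j, j ∈ S ↔ β₀ j ≠ 0)
    (hmin : ∀ β : Fin p → ℝ,
      (1 / (2 * n : ℝ)) * (∑ r, (y r - Xh.mulVec βh r) ^ 2) + μ * ∑ j, |βh j| ≤
        (1 / (2 * n : ℝ)) * (∑ r, (y r - Xh.mulVec β r) ^ 2) + μ * ∑ j, |β j|)
    (s : ℕ) (hs : S.card = s)
    (κ₂ : ℝ) (hκ₂ : 0 < κ₂)
    (hRE : ∀ (J : Finset (Fin p)) (δ : Fin p → ℝ), J.card ≤ s →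
      (∑ i ∈ Jᶜ, |δ i| ≤ 3 * ∑ i ∈ J, |δ i|) →
      (κ₂ / 2) * Real.sqrt n * Real.sqrt (∑ i ∈ J, (δ i) ^ 2) ≤
        Real.sqrt (∑ r, (Xh.mulVec δ r) ^ 2))
    (hnoise : ∀ j : Fin p,
      |(1 / (n : ℝ)) * (Xhᵀ.mulVec η) j -
        (1 / (n : ℝ)) * (Xhᵀ.mulVec ((Xh - X).mulVec β₀)) j| ≤ μ / 2) :
    (∑ r, (Xh.mulVec (βh - β₀) r) ^ 2) ≤ (64 / κ₂ ^ 2) * n * s * μ ^ 2 ∧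
      (∑ j, |βh j - β₀ j|) ≤ (64 / κ₂ ^ 2) * s * μ := by
  have hn' : (0 : ℝ) < n := Nat.cast_pos.mpr hn
  have hsupp : ∀ j ∉ S, β₀ j = 0 := fun j hj => not_not.1 fun h => hj ((hS j).2 h)
  have hw : y - Xh *ᵥ β₀ = η - (Xh - X) *ᵥ β₀ := by rw [hy, sub_mulVec]; abel
  have hcorr : ∀ j, |(Xhᵀ *ᵥ (η - (Xh - X) *ᵥ β₀)) j| ≤ n * μ / 2 := fun j => by
    have := hnoise j
    rw [← mul_sub, abs_mul, abs_of_pos (one_div_pos.2 hn'), ← Pi.sub_apply, ← mulVec_sub] at this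
    rw [one_div_mul_eq_div, div_le_iff₀ hn'] at this
    linarith
  have herr := lasso_prediction_error_le hn' hμ.le hw (hmin β₀) hcorr hsupp
  obtain ⟨hpred, hl1⟩ :=
    lasso_error_bounds_of_restricted_eigenvalue hn' hμ hκ₂ herr (hRE S _ hs.le)
  rw [hs] at hpred hl1
  exact ⟨hpred.trans (by gcongr; norm_num), hl1.trans (by gcongr; norm_num)⟩
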